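/- arXiv:1008.3716 — 2 statements merged into one kernel-verified Lean document; each statement's English description precedes it below -/
import Mathlib

section
/- Let y_F be the linear chain with nearest-neighbor spacing Fε, and suppose γ₂ := min{ φ''(F) + 4 φ''(2F), (φ'(F) + 2 φ'(2F))/F } > 0. Given f ∈ 𝒰, let u^a, u^CB ∈ 𝒰 satisfy δE^a(y_F)[v] + δ²E^a(y_F)[u^a, v] = ⟨f, v⟩ and δE^CB(y_F)[v] + δ²E^CB(y_F)[u^CB, v] = ⟨f, v⟩, respectively, for all v ∈ 𝒰. Then ‖(u^a − u^CB)'‖_{ℓ²_ε} ≤ (ε² max{ |φ''(2F)|, |φ'(2F)/(2F)| } / γ₂) ‖(u^a)'''‖_{ℓ²_ε}. -/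
noncomputable section

open Real Finset

/-- Euclidean norm on `ℝ × ℝ`. -/
def enorm2 (v : ℝ × ℝ) : ℝ := Real.sqrt (v.1 ^ 2 + v.2 ^ 2)

/-- Euclidean dot product on `ℝ × ℝ`. -/
def edot (v w : ℝ × ℝ) : ℝ := v.1 * w.1 + v.2 * w.2

/-- `N`-periodic mean-zero displacements (the space `𝒰`). -/
def IsDisp (N : ℕ) (u : ℤ → ℝ × ℝ) : Prop :=
  (∀ ℓ : ℤ, u (ℓ + (N : ℤ)) = u ℓ) ∧ ∑ ℓ ∈ Finset.Icc (1 : ℤ) (N : ℤ), u ℓ = 0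

/-- Constrained displacements (the space `𝒰̃`): second component vanishes. -/
def IsDisp1D (N : ℕ) (u : ℤ → ℝ × ℝ) : Prop :=
  IsDisp N u ∧ ∀ ℓ : ℤ, (u ℓ).2 = 0

/-- Backward difference `u'_ℓ = (u_ℓ - u_{ℓ-1})/ε`. -/
def bd (ε : ℝ) (u : ℤ → ℝ × ℝ) (ℓ : ℤ) : ℝ × ℝ := ε⁻¹ • (u ℓ - u (ℓ - 1))

/-- The inner product `⟨v,w⟩ = ε ∑_{ℓ=1}^N v_ℓ · w_ℓ`. -/
def ip (N : ℕ) (ε : ℝ) (v w : ℤ → ℝ × ℝ) : ℝ :=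
  ε * ∑ ℓ ∈ Finset.Icc (1 : ℤ) (N : ℤ), edot (v ℓ) (w ℓ)

/-- The norm `‖v‖_{ℓ²_ε}`. -/
def nrm (N : ℕ) (ε : ℝ) (v : ℤ → ℝ × ℝ) : ℝ :=
  Real.sqrt (ε * ∑ ℓ ∈ Finset.Icc (1 : ℤ) (N : ℤ), (enorm2 (v ℓ)) ^ 2)

/-- The atomistic energy `E^a`. -/
def Ea (N : ℕ) (ε : ℝ) (φ : ℝ → ℝ) (y : ℤ → ℝ × ℝ) : ℝ :=
  ε * ∑ ℓ ∈ Finset.Icc (1 : ℤ) (N : ℤ),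
    (φ (enorm2 (bd ε y ℓ)) + φ (enorm2 (bd ε y (ℓ + 1) + bd ε y ℓ)))

/-- The Cauchy–Born energy `E^CB`. -/
def ECB (N : ℕ) (ε : ℝ) (φ : ℝ → ℝ) (y : ℤ → ℝ × ℝ) : ℝ :=
  ε * ∑ ℓ ∈ Finset.Icc (1 : ℤ) (N : ℤ),
    (φ (enorm2 (bd ε y ℓ)) + φ (2 * enorm2 (bd ε y ℓ)))

/-- The bond-angle energy `E^b`. -/
def Eb (N : ℕ) (ε α : ℝ) (y : ℤ → ℝ × ℝ) : ℝ :=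
  ε * ∑ ℓ ∈ Finset.Icc (1 : ℤ) (N : ℤ),
    α * (1 - edot (bd ε y (ℓ + 1)) (bd ε y ℓ) /
      (enorm2 (bd ε y (ℓ + 1)) * enorm2 (bd ε y ℓ)))

/-- The quasi-nonlocal energy `E^QNL`. -/
def EQNL (N K : ℕ) (ε : ℝ) (φ : ℝ → ℝ) (y : ℤ → ℝ × ℝ) : ℝ :=
  ε * ∑ ℓ ∈ Finset.Icc (1 : ℤ) (N : ℤ), φ (enorm2 (bd ε y ℓ))
  + ε * ∑ ℓ ∈ Finset.Icc (1 : ℤ) (K : ℤ), φ (enorm2 (bd ε y (ℓ + 1) + bd ε y ℓ))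
  + ε * ∑ ℓ ∈ Finset.Icc ((K : ℤ) + 2) (N : ℤ), φ (2 * enorm2 (bd ε y ℓ))
  + ε / 2 * φ (2 * enorm2 (bd ε y 1)) + ε / 2 * φ (2 * enorm2 (bd ε y ((K : ℤ) + 1)))

/-- First variation `δE(y)[u] = (d/dt) E(y + t u) |_{t=0}`. -/
def dE (E : (ℤ → ℝ × ℝ) → ℝ) (y u : ℤ → ℝ × ℝ) : ℝ :=
  deriv (fun t : ℝ => E (fun ℓ => y ℓ + t • u ℓ)) 0

/-- Second variation `δ²E(y)[u,v] = (∂²/∂t∂s) E(y + t u + s v) |_{t=s=0}`. -/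
def d2E (E : (ℤ → ℝ × ℝ) → ℝ) (y u v : ℤ → ℝ × ℝ) : ℝ :=
  deriv (fun s : ℝ => deriv (fun t : ℝ => E (fun ℓ => y ℓ + t • u ℓ + s • v ℓ)) 0) 0

/-- The linear chain `y_{F,ℓ} = (Fεℓ, 0)`. -/
def yLin (ε F : ℝ) : ℤ → ℝ × ℝ := fun ℓ => (F * ε * ℓ, 0)

/-- The uniform circular chain of radius `R = Fε/(2 sin(πε))`. -/
def yCirc (ε F : ℝ) : ℤ → ℝ × ℝ := fun ℓ =>
  (F * ε / (2 * Real.sin (π * ε)) * Real.cos (2 * π * ε * ℓ),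
   F * ε / (2 * Real.sin (π * ε)) * Real.sin (2 * π * ε * ℓ))

/-!
Both Hessians at `y_F` are weighted `ℓ²_ε` products of strains. For `E^CB` the weights are
`φ''(F) + 4φ''(2F)` along the chain and `(φ'(F) + 2φ'(2F))/F` across it, so `δ²E^CB(y_F)` is
coercive with constant `γ₂`. For `E^a` the second-neighbour bond couples `u'_{ℓ+1} + u'_ℓ`, and
summation by parts gives `δ²E^a(y_F)[u,v] = δ²E^CB(y_F)[u,v] + ε² ⟨u'''_{·+1}, v'⟩`, weighted by
`φ''(2F)` and `φ'(2F)/(2F)`. The first variations vanish at `y_F` on periodic displacements, so for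
`w = u^a - u^CB` the two equations give `δ²E^a[u^a, w] = δ²E^CB[u^CB, w]`; hence
`γ₂ ‖w'‖² ≤ δ²E^CB[w, w] = -ε² ⟨(u^a)'''_{·+1}, w'⟩`, and Cauchy–Schwarz finishes the proof.
-/

open Filter Topology Function

section Periodic

variable {M : Type*} [AddCommGroup M] {N : ℕ} {g : ℤ → M}

theorem sum_Icc_one_sub (g : ℤ → M) (n : ℕ) :
    ∑ ℓ ∈ Icc (1 : ℤ) n, (g (ℓ + 1) - g ℓ) = g (n + 1) - g 1 := by
  induction n with
  | zero => simp
  | succ n ih =>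
    rw [Nat.cast_succ, ← insert_Icc_right_eq_Icc_add_one (by omega),
      sum_insert (by simp), ih]
    abel

theorem Function.Periodic.sum_Icc_comp_add_one (hg : Periodic g N) :
    ∑ ℓ ∈ Icc (1 : ℤ) N, g (ℓ + 1) = ∑ ℓ ∈ Icc (1 : ℤ) N, g ℓ := by
  rw [← sub_eq_zero, ← sum_sub_distrib, sum_Icc_one_sub, add_comm, hg, sub_self]

theorem Function.Periodic.sum_Icc_comp_sub_one (hg : Periodic g N) :
    ∑ ℓ ∈ Icc (1 : ℤ) N, g (ℓ - 1) = ∑ ℓ ∈ Icc (1 : ℤ) N, g ℓ := by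
  simpa using (hg.sub_const 1).sum_Icc_comp_add_one.symm

end Periodic

section Differences

variable {ε : ℝ} {N : ℕ}

theorem bd_periodic {u : ℤ → ℝ × ℝ} (hu : Periodic u N) : Periodic (bd ε u) N := by
  intro ℓ
  rw [bd, bd, hu, show ℓ + N - 1 = ℓ - 1 + N by ring, hu]

theorem bd_sub (u v : ℤ → ℝ × ℝ) (ℓ : ℤ) :
    bd ε (fun m => u m - v m) ℓ = bd ε u ℓ - bd ε v ℓ := by
  simp only [bd]
  module

theorem bd_add_smul (y u : ℤ → ℝ × ℝ) (t : ℝ) (ℓ : ℤ) :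
    bd ε (fun m => y m + t • u m) ℓ = bd ε y ℓ + t • bd ε u ℓ := by
  simp only [bd]
  module

theorem bd_yLin (hε : ε ≠ 0) (F : ℝ) (ℓ : ℤ) : bd ε (yLin ε F) ℓ = (F, 0) := by
  ext
  · simp [bd, yLin]
    field_simp
    ring
  · simp [bd, yLin]

theorem second_difference_eq_bd_bd (hε : ε ≠ 0) (a : ℤ → ℝ × ℝ) (ℓ : ℤ) :
    a (ℓ + 1) - 2 • a ℓ + a (ℓ - 1) = ε ^ 2 • bd ε (bd ε a) (ℓ + 1) := by
  simp only [bd, add_sub_cancel_right, smul_sub, smul_smul]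
  field_simp
  module

theorem sum_bd_eq_zero {u : ℤ → ℝ × ℝ} (hu : Periodic u N) :
    ∑ ℓ ∈ Icc (1 : ℤ) N, bd ε u ℓ = 0 := by
  simp only [bd, ← smul_sum, sum_sub_distrib, hu.sum_Icc_comp_sub_one, sub_self,
    smul_zero]

theorem IsDisp.sub {u v : ℤ → ℝ × ℝ} (hu : IsDisp N u) (hv : IsDisp N v) :
    IsDisp N (fun ℓ => u ℓ - v ℓ) :=
  ⟨Periodic.sub hu.1 hv.1, by rw [sum_sub_distrib, hu.2, hv.2, sub_zero]⟩

end Differences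

theorem enorm2_sq (x : ℝ × ℝ) : enorm2 x ^ 2 = x.1 ^ 2 + x.2 ^ 2 :=
  Real.sq_sqrt (by positivity)

theorem enorm2_fst {r : ℝ} (hr : 0 ≤ r) : enorm2 (r, 0) = r := by
  simp [enorm2, Real.sqrt_sq hr]

theorem abs_fst_mul_add_abs_snd_mul_le (x y : ℝ × ℝ) :
    |x.1 * y.1| + |x.2 * y.2| ≤ enorm2 x * enorm2 y := by
  rw [enorm2, enorm2, ← Real.sqrt_mul (by positivity), abs_mul, abs_mul]
  apply Real.le_sqrt_of_sq_le
  nlinarith [sq_nonneg (|x.1| * |y.2| - |x.2| * |y.1|), sq_abs x.1, sq_abs x.2, sq_abs y.1,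
    sq_abs y.2]

theorem sq_nrm {N : ℕ} {ε : ℝ} (hε : 0 ≤ ε) (v : ℤ → ℝ × ℝ) :
    nrm N ε v ^ 2 = ε * ∑ ℓ ∈ Icc (1 : ℤ) N, enorm2 (v ℓ) ^ 2 :=
  Real.sq_sqrt (by positivity)

theorem nrm_comp_add_one {N : ℕ} {ε : ℝ} {v : ℤ → ℝ × ℝ} (hv : Periodic v N) :
    nrm N ε (fun ℓ => v (ℓ + 1)) = nrm N ε v := by
  rw [nrm, nrm, Periodic.sum_Icc_comp_add_one (g := fun ℓ => enorm2 (v ℓ) ^ 2)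
    fun ℓ => by simp only [hv ℓ]]

/-- `edot` with the coordinate along the chain weighted by `c₁` and the transversal one by `c₂`. -/
def wdot (c₁ c₂ : ℝ) (x y : ℝ × ℝ) : ℝ := c₁ * (x.1 * y.1) + c₂ * (x.2 * y.2)

theorem wdot_add_wdot (c₁ c₂ d₁ d₂ : ℝ) (x y : ℝ × ℝ) :
    wdot c₁ c₂ x y + wdot d₁ d₂ x y = wdot (c₁ + d₁) (c₂ + d₂) x y := by
  simp only [wdot]
  ring

theorem abs_wdot_le (c₁ c₂ : ℝ) (x y : ℝ × ℝ) :
    |wdot c₁ c₂ x y| ≤ max |c₁| |c₂| * (enorm2 x * enorm2 y) := calc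
  |wdot c₁ c₂ x y| ≤ |c₁| * |x.1 * y.1| + |c₂| * |x.2 * y.2| := by
    rw [wdot, ← abs_mul, ← abs_mul]
    exact abs_add_le _ _
  _ ≤ max |c₁| |c₂| * (|x.1 * y.1| + |x.2 * y.2|) := by
    rw [mul_add]
    gcongr
    exacts [le_max_left _ _, le_max_right _ _]
  _ ≤ max |c₁| |c₂| * (enorm2 x * enorm2 y) := by
    gcongr
    exact abs_fst_mul_add_abs_snd_mul_le x y

theorem min_mul_enorm2_sq_le_wdot (c₁ c₂ : ℝ) (x : ℝ × ℝ) :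
    min c₁ c₂ * enorm2 x ^ 2 ≤ wdot c₁ c₂ x x := by
  rw [enorm2_sq, wdot]
  nlinarith [mul_le_mul_of_nonneg_right (min_le_left c₁ c₂) (sq_nonneg x.1),
    mul_le_mul_of_nonneg_right (min_le_right c₁ c₂) (sq_nonneg x.2)]

def wip (N : ℕ) (ε c₁ c₂ : ℝ) (v w : ℤ → ℝ × ℝ) : ℝ :=
  ε * ∑ ℓ ∈ Icc (1 : ℤ) N, wdot c₁ c₂ (v ℓ) (w ℓ)

section WeightedInner

variable {N : ℕ} {ε : ℝ} (c₁ c₂ : ℝ)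

theorem wip_sub_left (u v w : ℤ → ℝ × ℝ) :
    wip N ε c₁ c₂ (fun ℓ => u ℓ - v ℓ) w = wip N ε c₁ c₂ u w - wip N ε c₁ c₂ v w := by
  simp only [wip, ← mul_sub, ← sum_sub_distrib, wdot, Prod.fst_sub, Prod.snd_sub]
  congr 1
  exact sum_congr rfl fun _ _ => by ring

theorem wip_smul_left (a : ℝ) (v w : ℤ → ℝ × ℝ) :
    wip N ε c₁ c₂ (fun ℓ => a • v ℓ) w = a * wip N ε c₁ c₂ v w := by
  simp only [wip, mul_left_comm a ε, mul_sum]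
  refine sum_congr rfl fun _ _ => ?_
  simp only [wdot, Prod.smul_fst, Prod.smul_snd, smul_eq_mul]
  ring

theorem wip_add_mul_wip (a d₁ d₂ : ℝ) (v w : ℤ → ℝ × ℝ) :
    wip N ε c₁ c₂ v w + a * wip N ε d₁ d₂ v w = wip N ε (c₁ + a * d₁) (c₂ + a * d₂) v w := by
  simp only [wip, mul_sum, ← sum_add_distrib]
  refine sum_congr rfl fun _ _ => ?_
  simp only [wdot]
  ring

theorem min_mul_nrm_sq_le_wip (hε : 0 ≤ ε) (v : ℤ → ℝ × ℝ) :
    min c₁ c₂ * nrm N ε v ^ 2 ≤ wip N ε c₁ c₂ v v := by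
  rw [sq_nrm hε, wip, mul_left_comm, mul_sum]
  gcongr with ℓ
  exact min_mul_enorm2_sq_le_wdot c₁ c₂ (v ℓ)

theorem abs_wip_le (hε : 0 ≤ ε) (v w : ℤ → ℝ × ℝ) :
    |wip N ε c₁ c₂ v w| ≤ max |c₁| |c₂| * (nrm N ε v * nrm N ε w) := calc
  |wip N ε c₁ c₂ v w| ≤ ε * ∑ ℓ ∈ Icc (1 : ℤ) N, max |c₁| |c₂| * (enorm2 (v ℓ) * enorm2 (w ℓ)) := by
    rw [wip, abs_mul, abs_of_nonneg hε]
    gcongr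
    exact (abs_sum_le_sum_abs _ _).trans (sum_le_sum fun ℓ _ => abs_wdot_le c₁ c₂ _ _)
  _ ≤ max |c₁| |c₂| * (nrm N ε v * nrm N ε w) := by
    rw [← mul_sum, mul_left_comm, nrm, nrm, Real.sqrt_mul hε, Real.sqrt_mul hε,
      mul_mul_mul_comm, Real.mul_self_sqrt hε]
    gcongr
    exact Real.sum_mul_le_sqrt_mul_sqrt _ _ _

/-- Summation by parts turns the next-nearest-neighbour coupling into a second difference. -/
theorem wip_add_shift {a b : ℤ → ℝ × ℝ} (ha : Periodic a N) (hb : Periodic b N) :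
    wip N ε c₁ c₂ (fun ℓ => a (ℓ + 1) + a ℓ) (fun ℓ => b (ℓ + 1) + b ℓ)
      = 4 * wip N ε c₁ c₂ a b + wip N ε c₁ c₂ (fun ℓ => a (ℓ + 1) - 2 • a ℓ + a (ℓ - 1)) b := by
  have hdiag : ∑ ℓ ∈ Icc (1 : ℤ) N, wdot c₁ c₂ (a (ℓ + 1)) (b (ℓ + 1))
      = ∑ ℓ ∈ Icc (1 : ℤ) N, wdot c₁ c₂ (a ℓ) (b ℓ) :=
    Periodic.sum_Icc_comp_add_one (g := fun ℓ => wdot c₁ c₂ (a ℓ) (b ℓ))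
      fun ℓ => by simp only [ha ℓ, hb ℓ]
  have hoff : ∑ ℓ ∈ Icc (1 : ℤ) N, wdot c₁ c₂ (a ℓ) (b (ℓ + 1))
      = ∑ ℓ ∈ Icc (1 : ℤ) N, wdot c₁ c₂ (a (ℓ - 1)) (b ℓ) := by
    simpa using Periodic.sum_Icc_comp_add_one (g := fun ℓ => wdot c₁ c₂ (a (ℓ - 1)) (b ℓ))
      fun ℓ => by dsimp only; rw [show ℓ + N - 1 = ℓ - 1 + N by ring, ha, hb]
  have hpt : ∀ ℓ, wdot c₁ c₂ (a (ℓ + 1) + a ℓ) (b (ℓ + 1) + b ℓ)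
      = 4 * wdot c₁ c₂ (a ℓ) (b ℓ) + wdot c₁ c₂ (a (ℓ + 1) - 2 • a ℓ + a (ℓ - 1)) (b ℓ)
        + (wdot c₁ c₂ (a (ℓ + 1)) (b (ℓ + 1)) - wdot c₁ c₂ (a ℓ) (b ℓ))
        + (wdot c₁ c₂ (a ℓ) (b (ℓ + 1)) - wdot c₁ c₂ (a (ℓ - 1)) (b ℓ)) := fun ℓ => by
    simp only [wdot, Prod.fst_add, Prod.snd_add, Prod.fst_sub, Prod.snd_sub, two_nsmul]
    ring
  simp only [wip, hpt, sum_add_distrib, sum_sub_distrib, hdiag, hoff, ← mul_sum]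
  ring

end WeightedInner

/-- A witnessed form of `deriv (fun s => deriv (fun t => h t s) 0) 0 = c` (the shape of `d2E`)
that, unlike that equation, is stable under sums. -/
def HasMixedDerivAtZero (h : ℝ → ℝ → ℝ) (c : ℝ) : Prop :=
  ∃ H : ℝ → ℝ, (∀ᶠ s in 𝓝 0, HasDerivAt (fun t => h t s) (H s) 0) ∧ HasDerivAt H c 0

namespace HasMixedDerivAtZero

variable {h h₁ h₂ : ℝ → ℝ → ℝ} {c c₁ c₂ : ℝ}

theorem deriv_deriv_eq (hh : HasMixedDerivAtZero h c) :
    deriv (fun s => deriv (fun t => h t s) 0) 0 = c := by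
  obtain ⟨H, hinner, hH⟩ := hh
  rw [EventuallyEq.deriv_eq (hinner.mono fun s hs => hs.deriv)]
  exact hH.deriv

theorem add (hh₁ : HasMixedDerivAtZero h₁ c₁) (hh₂ : HasMixedDerivAtZero h₂ c₂) :
    HasMixedDerivAtZero (fun t s => h₁ t s + h₂ t s) (c₁ + c₂) := by
  obtain ⟨H₁, hinner₁, hH₁⟩ := hh₁
  obtain ⟨H₂, hinner₂, hH₂⟩ := hh₂
  exact ⟨fun s => H₁ s + H₂ s, hinner₁.and hinner₂ |>.mono fun _ hs => hs.1.add hs.2, hH₁.add hH₂⟩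

theorem const_mul (a : ℝ) (hh : HasMixedDerivAtZero h c) :
    HasMixedDerivAtZero (fun t s => a * h t s) (a * c) := by
  obtain ⟨H, hinner, hH⟩ := hh
  exact ⟨fun s => a * H s, hinner.mono fun _ hs => hs.const_mul a, hH.const_mul a⟩

theorem sum {ι : Type*} {S : Finset ι} {h : ι → ℝ → ℝ → ℝ} {c : ι → ℝ}
    (hh : ∀ i ∈ S, HasMixedDerivAtZero (h i) (c i)) :
    HasMixedDerivAtZero (fun t s => ∑ i ∈ S, h i t s) (∑ i ∈ S, c i) := by
  choose! H hinner hH using hh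
  exact ⟨fun s => ∑ i ∈ S, H i s,
    ((eventually_all_finset S).2 hinner).mono fun _ hs => HasDerivAt.fun_sum hs,
    HasDerivAt.fun_sum hH⟩

end HasMixedDerivAtZero

section Calculus

theorem hasDerivAt_enorm2_line {p : ℝ × ℝ} (hp : 0 < enorm2 p) (a : ℝ × ℝ) :
    HasDerivAt (fun t : ℝ => enorm2 (p + t • a)) (edot p a / enorm2 p) 0 := by
  have hline (x y : ℝ) : HasDerivAt (fun t : ℝ => x + t * y) y 0 := by
    simpa using ((hasDerivAt_id (0 : ℝ)).mul_const y).const_add x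
  have hsq : HasDerivAt (fun t : ℝ => (p.1 + t * a.1) ^ 2 + (p.2 + t * a.2) ^ 2)
      (2 * edot p a) 0 :=
    (((hline p.1 a.1).fun_pow 2).fun_add ((hline p.2 a.2).fun_pow 2)).congr_deriv
      (by simp only [edot]; ring)
  have hp' : (p.1 + 0 * a.1) ^ 2 + (p.2 + 0 * a.2) ^ 2 ≠ 0 := by
    simpa using (Real.sqrt_pos.1 hp).ne'
  convert hsq.sqrt hp' using 1
  · funext t
    simp only [enorm2, Prod.fst_add, Prod.snd_add, Prod.smul_fst, Prod.smul_snd, smul_eq_mul]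
  · simp only [enorm2, zero_mul, add_zero]
    field_simp

variable {g g' g'' : ℝ → ℝ}

theorem hasDerivAt_comp_enorm2_line (hg : ∀ x, 0 < x → HasDerivAt g (g' x) x) {p : ℝ × ℝ}
    (hp : 0 < enorm2 p) (a : ℝ × ℝ) :
    HasDerivAt (fun t : ℝ => g (enorm2 (p + t • a))) (g' (enorm2 p) * (edot p a / enorm2 p)) 0 :=
  (hg _ hp).comp_of_eq 0 (hasDerivAt_enorm2_line hp a) (by simp)

theorem hasDerivAt_bond (hg : ∀ x, 0 < x → HasDerivAt g (g' x) x) {r : ℝ} (hr : 0 < r)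
    (a : ℝ × ℝ) : HasDerivAt (fun t : ℝ => g (enorm2 ((r, 0) + t • a))) (g' r * a.1) 0 := by
  convert hasDerivAt_comp_enorm2_line hg (p := (r, 0)) (by rwa [enorm2_fst hr.le]) a using 1
  rw [enorm2_fst hr.le, edot]
  field_simp
  ring

theorem hasDerivAt_comp_two_mul (hg : ∀ x, 0 < x → HasDerivAt g (g' x) x) :
    ∀ x, 0 < x → HasDerivAt (fun r => g (2 * r)) (g' (2 * x) * 2) x := fun x hx =>
  (hg (2 * x) (by positivity)).comp x ((hasDerivAt_id x).const_mul 2 |>.congr_deriv (mul_one 2))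

theorem hasMixedDerivAtZero_bond (hg : ∀ x, 0 < x → HasDerivAt g (g' x) x)
    (hg' : ∀ x, 0 < x → HasDerivAt g' (g'' x) x) {r : ℝ} (hr : 0 < r) (a b : ℝ × ℝ) :
    HasMixedDerivAtZero (fun t s => g (enorm2 ((r, 0) + t • a + s • b)))
      (wdot (g'' r) (g' r / r) a b) := by
  set p : ℝ → ℝ × ℝ := fun s => (r, 0) + s • b
  have hr' : 0 < enorm2 (r, 0) := by rwa [enorm2_fst hr.le]
  have hcont : Continuous fun s => enorm2 (p s) := by
    simp only [p, enorm2]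
    fun_prop
  have hpos : ∀ᶠ s in 𝓝 0, 0 < enorm2 (p s) :=
    (hcont.tendsto 0).eventually (lt_mem_nhds (by simpa [p] using hr'))
  refine ⟨fun s => g' (enorm2 (p s)) * (edot (p s) a / enorm2 (p s)),
    hpos.mono fun s hs => ?_, ?_⟩
  · simpa only [add_right_comm] using hasDerivAt_comp_enorm2_line hg hs a
  have hn := hasDerivAt_enorm2_line hr' b
  have hedot : HasDerivAt (fun s => edot (p s) a) (edot b a) 0 := by
    have hlin : (fun s => edot (p s) a) = fun s => r * a.1 + s * edot b a := by
      funext s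
      simp only [p, edot, Prod.fst_add, Prod.snd_add, Prod.smul_fst, Prod.smul_snd, smul_eq_mul]
      ring
    rw [hlin]
    simpa using ((hasDerivAt_id (0 : ℝ)).mul_const (edot b a)).const_add (r * a.1)
  have hval : enorm2 ((r, 0) + (0 : ℝ) • b) = r := by simp [enorm2_fst hr.le]
  refine (((hg' r hr).comp_of_eq 0 hn hval.symm).fun_mul
    (hedot.fun_div hn (by rw [hval]; exact hr.ne'))).congr_deriv ?_
  simp only [p, Function.comp_apply, enorm2_fst hr.le, edot, wdot, zero_smul, add_zero]
  field_simp
  ring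

end Calculus

theorem add_bond_vectors (F t : ℝ) (a₁ a₂ : ℝ × ℝ) :
    ((F, 0) + t • a₁) + ((F, 0) + t • a₂) = (2 * F, 0) + t • (a₁ + a₂) := by
  ext
  · simp only [Prod.fst_add, Prod.smul_fst, smul_eq_mul]
    ring
  · simp

theorem add_bond_vectors₂ (F t s : ℝ) (a₁ a₂ b₁ b₂ : ℝ × ℝ) :
    ((F, 0) + t • a₁ + s • b₁) + ((F, 0) + t • a₂ + s • b₂)
      = (2 * F, 0) + t • (a₁ + a₂) + s • (b₁ + b₂) := by
  ext <;> simp <;> ring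

section LinearChain

variable {N : ℕ} {ε : ℝ} {φ : ℝ → ℝ} {F : ℝ}

theorem bd_yLin_add_smul (hε : ε ≠ 0) (t : ℝ) (u : ℤ → ℝ × ℝ) (ℓ : ℤ) :
    bd ε (fun m => yLin ε F m + t • u m) ℓ = (F, 0) + t • bd ε u ℓ := by
  rw [bd_add_smul, bd_yLin hε]

theorem bd_yLin_add_smul_add_smul (hε : ε ≠ 0) (t s : ℝ) (u v : ℤ → ℝ × ℝ) (ℓ : ℤ) :
    bd ε (fun m => yLin ε F m + t • u m + s • v m) ℓ
      = (F, 0) + t • bd ε u ℓ + s • bd ε v ℓ := by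
  rw [bd_add_smul (fun m => yLin ε F m + t • u m), bd_yLin_add_smul hε]

theorem dE_Ea_yLin_eq_zero (hε : ε ≠ 0) (hF : 0 < F)
    (hφ₁ : ∀ x, 0 < x → HasDerivAt φ (deriv φ x) x) {v : ℤ → ℝ × ℝ} (hv : Periodic v N) :
    dE (Ea N ε φ) (yLin ε F) v = 0 := by
  have hsum : ∑ ℓ ∈ Icc (1 : ℤ) N, bd ε v ℓ = 0 := sum_bd_eq_zero hv
  have hsum' : ∑ ℓ ∈ Icc (1 : ℤ) N, bd ε v (ℓ + 1) = 0 :=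
    (bd_periodic hv).sum_Icc_comp_add_one.trans hsum
  simp only [dE, Ea, bd_yLin_add_smul hε, add_bond_vectors]
  refine ((HasDerivAt.fun_sum fun ℓ _ => (hasDerivAt_bond hφ₁ hF (bd ε v ℓ)).fun_add
    (hasDerivAt_bond hφ₁ (by positivity : 0 < 2 * F) (bd ε v (ℓ + 1) + bd ε v ℓ))).const_mul
      ε).deriv.trans ?_
  simp only [Prod.fst_add, mul_add, sum_add_distrib, ← mul_sum, ← Prod.fst_sum, hsum, hsum',
    Prod.fst_zero, mul_zero, add_zero]

theorem dE_ECB_yLin_eq_zero (hε : ε ≠ 0) (hF : 0 < F)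
    (hφ₁ : ∀ x, 0 < x → HasDerivAt φ (deriv φ x) x) {v : ℤ → ℝ × ℝ} (hv : Periodic v N) :
    dE (ECB N ε φ) (yLin ε F) v = 0 := by
  simp only [dE, ECB, bd_yLin_add_smul hε]
  refine ((HasDerivAt.fun_sum fun ℓ _ => (hasDerivAt_bond hφ₁ hF (bd ε v ℓ)).fun_add
    (hasDerivAt_bond (hasDerivAt_comp_two_mul hφ₁) hF (bd ε v ℓ))).const_mul ε).deriv.trans ?_
  simp only [← add_mul, ← mul_sum, ← Prod.fst_sum, sum_bd_eq_zero hv, Prod.fst_zero, mul_zero]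

theorem d2E_Ea_yLin (hε : ε ≠ 0) (hF : 0 < F)
    (hφ₁ : ∀ x, 0 < x → HasDerivAt φ (deriv φ x) x)
    (hφ₂ : ∀ x, 0 < x → HasDerivAt (deriv φ) (deriv (deriv φ) x) x) (u v : ℤ → ℝ × ℝ) :
    d2E (Ea N ε φ) (yLin ε F) u v
      = wip N ε (deriv (deriv φ) F) (deriv φ F / F) (bd ε u) (bd ε v)
        + wip N ε (deriv (deriv φ) (2 * F)) (deriv φ (2 * F) / (2 * F))
          (fun ℓ => bd ε u (ℓ + 1) + bd ε u ℓ) (fun ℓ => bd ε v (ℓ + 1) + bd ε v ℓ) := by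
  simp only [d2E, Ea, bd_yLin_add_smul_add_smul hε, add_bond_vectors₂]
  refine (HasMixedDerivAtZero.const_mul ε <| HasMixedDerivAtZero.sum fun ℓ _ =>
    (hasMixedDerivAtZero_bond hφ₁ hφ₂ hF (bd ε u ℓ) (bd ε v ℓ)).add
      (hasMixedDerivAtZero_bond hφ₁ hφ₂ (by positivity : 0 < 2 * F)
        (bd ε u (ℓ + 1) + bd ε u ℓ) (bd ε v (ℓ + 1) + bd ε v ℓ))).deriv_deriv_eq.trans ?_
  rw [wip, wip, ← mul_add, ← sum_add_distrib]

theorem d2E_ECB_yLin (hε : ε ≠ 0) (hF : 0 < F)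
    (hφ₁ : ∀ x, 0 < x → HasDerivAt φ (deriv φ x) x)
    (hφ₂ : ∀ x, 0 < x → HasDerivAt (deriv φ) (deriv (deriv φ) x) x) (u v : ℤ → ℝ × ℝ) :
    d2E (ECB N ε φ) (yLin ε F) u v
      = wip N ε (deriv (deriv φ) F + 4 * deriv (deriv φ) (2 * F))
          ((deriv φ F + 2 * deriv φ (2 * F)) / F) (bd ε u) (bd ε v) := by
  have hφ₂' (x : ℝ) (hx : 0 < x) := (hasDerivAt_comp_two_mul hφ₂ x hx).mul_const 2
  simp only [d2E, ECB, bd_yLin_add_smul_add_smul hε]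
  refine (HasMixedDerivAtZero.const_mul ε <| HasMixedDerivAtZero.sum fun ℓ _ =>
    (hasMixedDerivAtZero_bond hφ₁ hφ₂ hF (bd ε u ℓ) (bd ε v ℓ)).add
      (hasMixedDerivAtZero_bond (hasDerivAt_comp_two_mul hφ₁) hφ₂' hF (bd ε u ℓ) (bd ε v ℓ))
    ).deriv_deriv_eq.trans ?_
  rw [wip]
  congr 1
  refine sum_congr rfl fun ℓ _ => ?_
  rw [wdot_add_wdot]
  congr 1 <;> ring

theorem d2E_ECB_yLin_sub_left (hε : ε ≠ 0) (hF : 0 < F)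
    (hφ₁ : ∀ x, 0 < x → HasDerivAt φ (deriv φ x) x)
    (hφ₂ : ∀ x, 0 < x → HasDerivAt (deriv φ) (deriv (deriv φ) x) x) (u₁ u₂ v : ℤ → ℝ × ℝ) :
    d2E (ECB N ε φ) (yLin ε F) (fun ℓ => u₁ ℓ - u₂ ℓ) v
      = d2E (ECB N ε φ) (yLin ε F) u₁ v - d2E (ECB N ε φ) (yLin ε F) u₂ v := by
  simp only [d2E_ECB_yLin hε hF hφ₁ hφ₂, ← wip_sub_left]
  congr 1
  exact funext (bd_sub u₁ u₂)

theorem d2E_Ea_yLin_eq_d2E_ECB_add (hε : ε ≠ 0) (hF : 0 < F)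
    (hφ₁ : ∀ x, 0 < x → HasDerivAt φ (deriv φ x) x)
    (hφ₂ : ∀ x, 0 < x → HasDerivAt (deriv φ) (deriv (deriv φ) x) x) {u v : ℤ → ℝ × ℝ}
    (hu : Periodic u N) (hv : Periodic v N) :
    d2E (Ea N ε φ) (yLin ε F) u v
      = d2E (ECB N ε φ) (yLin ε F) u v
        + ε ^ 2 * wip N ε (deriv (deriv φ) (2 * F)) (deriv φ (2 * F) / (2 * F))
          (fun ℓ => bd ε (bd ε (bd ε u)) (ℓ + 1)) (bd ε v) := by
  rw [d2E_Ea_yLin hε hF hφ₁ hφ₂, d2E_ECB_yLin hε hF hφ₁ hφ₂,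
    wip_add_shift _ _ (bd_periodic hu) (bd_periodic hv), ← add_assoc, wip_add_mul_wip]
  congr 1
  · congr 1
    field_simp
    ring
  · simp_rw [second_difference_eq_bd_bd hε, wip_smul_left]

theorem d2E_ECB_yLin_sub_d2E_Ea_yLin_le (hε : 0 < ε) (hF : 0 < F)
    (hφ₁ : ∀ x, 0 < x → HasDerivAt φ (deriv φ x) x)
    (hφ₂ : ∀ x, 0 < x → HasDerivAt (deriv φ) (deriv (deriv φ) x) x) {u v : ℤ → ℝ × ℝ}
    (hu : Periodic u N) (hv : Periodic v N) :
    d2E (ECB N ε φ) (yLin ε F) u v - d2E (Ea N ε φ) (yLin ε F) u v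
      ≤ ε ^ 2 * (max |deriv (deriv φ) (2 * F)| |deriv φ (2 * F) / (2 * F)|
        * (nrm N ε (bd ε (bd ε (bd ε u))) * nrm N ε (bd ε v))) := by
  rw [d2E_Ea_yLin_eq_d2E_ECB_add hε.ne' hF hφ₁ hφ₂ hu hv, sub_add_cancel_left, ← mul_neg,
    ← nrm_comp_add_one (bd_periodic (bd_periodic (bd_periodic hu)))]
  gcongr
  exact (neg_le_abs _).trans (abs_wip_le _ _ hε.le _ _)

end LinearChain

theorem le_div_of_mul_sq_le_mul {γ x K : ℝ} (hγ : 0 < γ) (hx : 0 ≤ x) (hK : 0 ≤ K)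
    (h : γ * x ^ 2 ≤ K * x) : x ≤ K / γ := by
  rw [le_div_iff₀ hγ]
  rcases hx.eq_or_lt with rfl | hx
  · simpa using hK
  · exact le_of_mul_le_mul_right (by linarith [show x * γ * x = γ * x ^ 2 by ring]) hx

theorem hasDerivAt_deriv_of_contDiffOn_Ioi {φ : ℝ → ℝ} (hφ : ContDiffOn ℝ 2 φ (Set.Ioi 0)) :
    (∀ x, 0 < x → HasDerivAt φ (deriv φ x) x)
      ∧ ∀ x, 0 < x → HasDerivAt (deriv φ) (deriv (deriv φ) x) x := by
  have hφ' : ContDiffOn ℝ 1 (deriv φ) (Set.Ioi 0) := hφ.deriv_of_isOpen isOpen_Ioi (by norm_num)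
  exact ⟨fun x hx => ((hφ.differentiableOn (by norm_num)).differentiableAt
      (isOpen_Ioi.mem_nhds hx)).hasDerivAt,
    fun x hx => ((hφ'.differentiableOn (by norm_num)).differentiableAt
      (isOpen_Ioi.mem_nhds hx)).hasDerivAt⟩

theorem stmt_12_general (N : ℕ) (hN : 4 ≤ N) (ε : ℝ) (hε : ε = (N : ℝ)⁻¹)
    (φ : ℝ → ℝ) (hφ : ContDiffOn ℝ 2 φ (Set.Ioi 0)) (F : ℝ) (hF : 0 < F)
    (hγ : 0 < min (deriv (deriv φ) F + 4 * deriv (deriv φ) (2 * F))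
      ((deriv φ F + 2 * deriv φ (2 * F)) / F))
    (f ua uCB : ℤ → ℝ × ℝ) (hua : IsDisp N ua) (huCB : IsDisp N uCB)
    (heqa : ∀ v : ℤ → ℝ × ℝ, IsDisp N v →
      dE (Ea N ε φ) (yLin ε F) v + d2E (Ea N ε φ) (yLin ε F) ua v = ip N ε f v)
    (heqCB : ∀ v : ℤ → ℝ × ℝ, IsDisp N v →
      dE (ECB N ε φ) (yLin ε F) v + d2E (ECB N ε φ) (yLin ε F) uCB v = ip N ε f v) :
    nrm N ε (bd ε (fun ℓ => ua ℓ - uCB ℓ)) ≤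
      ε ^ 2 * max |deriv (deriv φ) (2 * F)| |deriv φ (2 * F) / (2 * F)| /
        min (deriv (deriv φ) F + 4 * deriv (deriv φ) (2 * F))
          ((deriv φ F + 2 * deriv φ (2 * F)) / F) *
        nrm N ε (bd ε (bd ε (bd ε ua))) := by
  have hε₀ : 0 < ε := hε ▸ inv_pos.2 (by exact_mod_cast (by omega : 0 < N))
  obtain ⟨hφ₁, hφ₂⟩ := hasDerivAt_deriv_of_contDiffOn_Ioi hφ
  set w := fun ℓ => ua ℓ - uCB ℓ
  have hw : IsDisp N w := hua.sub huCB
  have horth : d2E (Ea N ε φ) (yLin ε F) ua w = d2E (ECB N ε φ) (yLin ε F) uCB w := by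
    have ha := heqa w hw
    rwa [dE_Ea_yLin_eq_zero hε₀.ne' hF hφ₁ hw.1, zero_add, ← heqCB w hw,
      dE_ECB_yLin_eq_zero hε₀.ne' hF hφ₁ hw.1, zero_add] at ha
  rw [div_mul_eq_mul_div]
  refine le_div_of_mul_sq_le_mul hγ (Real.sqrt_nonneg _)
    (mul_nonneg (by positivity) (Real.sqrt_nonneg _)) ?_
  calc _ ≤ d2E (ECB N ε φ) (yLin ε F) w w := by
        rw [d2E_ECB_yLin hε₀.ne' hF hφ₁ hφ₂]
        exact min_mul_nrm_sq_le_wip _ _ hε₀.le _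
    _ = d2E (ECB N ε φ) (yLin ε F) ua w - d2E (Ea N ε φ) (yLin ε F) ua w := by
        rw [horth]
        exact d2E_ECB_yLin_sub_left hε₀.ne' hF hφ₁ hφ₂ ua uCB w
    _ ≤ _ := (d2E_ECB_yLin_sub_d2E_Ea_yLin_le hε₀ hF hφ₁ hφ₂ hua.1 hw.1).trans_eq (by ring)

theorem stmt_12 (N : ℕ) (hN : 4 ≤ N) (ε : ℝ) (hε : ε = (N : ℝ)⁻¹)
    (φ : ℝ → ℝ) (hφ : ContDiffOn ℝ 2 φ (Set.Ioi 0)) (F : ℝ) (hF : 0 < F)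
    (hγ : 0 < min (deriv (deriv φ) F + 4 * deriv (deriv φ) (2 * F))
      ((deriv φ F + 2 * deriv φ (2 * F)) / F))
    (f ua uCB : ℤ → ℝ × ℝ) (hf : IsDisp N f) (hua : IsDisp N ua) (huCB : IsDisp N uCB)
    (heqa : ∀ v : ℤ → ℝ × ℝ, IsDisp N v →
      dE (Ea N ε φ) (yLin ε F) v + d2E (Ea N ε φ) (yLin ε F) ua v = ip N ε f v)
    (heqCB : ∀ v : ℤ → ℝ × ℝ, IsDisp N v →
      dE (ECB N ε φ) (yLin ε F) v + d2E (ECB N ε φ) (yLin ε F) uCB v = ip N ε f v) :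
    nrm N ε (bd ε (fun ℓ => ua ℓ - uCB ℓ)) ≤
      ε ^ 2 * max |deriv (deriv φ) (2 * F)| |deriv φ (2 * F) / (2 * F)| /
        min (deriv (deriv φ) F + 4 * deriv (deriv φ) (2 * F))
          ((deriv φ F + 2 * deriv φ (2 * F)) / F) *
        nrm N ε (bd ε (bd ε (bd ε ua))) :=
  stmt_12_general N hN ε hε φ hφ F hF hγ f ua uCB hua huCB heqa heqCB
end
end

section
/- Let y_F be the linear chain with nearest-neighbor spacing Fε, let f ∈ 𝒰, and let u^a ∈ 𝒰 satisfy δE^a(y_F)[v] + δ²E^a(y_F)[u^a, v] = ⟨f, v⟩ for all v ∈ 𝒰. Then for every v ∈ 𝒰, | δE^QNL(y_F)[v] + δ²E^QNL(y_F)[u^a, v] − ⟨f, v⟩ | ≤ ε max{ |φ''(2F)|, |φ'(2F)/(2F)| } · [ ( ε‖(u^a)''_1‖² + ε‖(u^a)''_{K+2}‖² )^{1/2} + ε ( ε Σ_{ℓ=K+2}^N ‖(u^a)'''_{ℓ+1}‖² )^{1/2} ] · ‖v'‖_{ℓ²_ε}. -/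
noncomputable section

open Real Finset

/-!
At the linear chain every bond of `y_F + t u + s v` is a perturbation of a bond `(c, 0)`, so the
first and second variations of both energies are bond sums of `φ'(c) p₁` and of the Hessian
`φ''(c) p₁ q₁ + φ'(c)/c p₂ q₂` of `x ↦ φ ‖x‖` at `(c, 0)`. The first-neighbour sums coincide. Where
the QNL energy replaces second-neighbour bonds by doubled first-neighbour bonds, summation by parts
on the periodic chain shows that the first variations still agree, while the second variations
differ by two interface terms in `u''` and a bulk term `ε² ∑ u'''_{ℓ+1} · v'_ℓ`. The equation for
`u^a` replaces `⟨f, v⟩` by the atomistic variations, and Cauchy–Schwarz bounds the three remaining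
terms.
-/

open Filter Topology

/-- `e t s` stands for `E (y + t u + s v)`: `a` is its `t`-derivative and `b` its mixed derivative
at the origin. The `t`-derivative is only required for `s` near `0`, where all bonds stay away
from the singularity of the norm. -/
def HasVariations (e : ℝ → ℝ → ℝ) (a b : ℝ) : Prop :=
  ∃ g : ℝ → ℝ, (∀ᶠ s in 𝓝 0, HasDerivAt (fun t => e t s) (g s) 0) ∧ g 0 = a ∧ HasDerivAt g b 0

namespace HasVariations

variable {e e' : ℝ → ℝ → ℝ} {a a' b b' : ℝ}

theorem add (h : HasVariations e a b) (h' : HasVariations e' a' b') :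
    HasVariations (fun t s => e t s + e' t s) (a + a') (b + b') := by
  obtain ⟨g, hg, hg0, hgd⟩ := h
  obtain ⟨g', hg', hg0', hgd'⟩ := h'
  exact ⟨g + g', hg.and hg' |>.mono fun s hs => hs.1.add hs.2, by simp [hg0, hg0'], hgd.add hgd'⟩

theorem const_mul (h : HasVariations e a b) (c : ℝ) :
    HasVariations (fun t s => c * e t s) (c * a) (c * b) := by
  obtain ⟨g, hg, hg0, hgd⟩ := h
  exact ⟨fun s => c * g s, hg.mono fun s hs => hs.const_mul c, by simp [hg0], hgd.const_mul c⟩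

theorem sum {ι : Type*} {e : ι → ℝ → ℝ → ℝ} {a b : ι → ℝ} (S : Finset ι)
    (h : ∀ i ∈ S, HasVariations (e i) (a i) (b i)) :
    HasVariations (fun t s => ∑ i ∈ S, e i t s) (∑ i ∈ S, a i) (∑ i ∈ S, b i) := by
  choose! g hg hg0 hgd using h
  refine ⟨fun s => ∑ i ∈ S, g i s, ?_, Finset.sum_congr rfl hg0, HasDerivAt.fun_sum hgd⟩
  filter_upwards [(Finset.eventually_all S).2 hg] with s hs
  exact HasDerivAt.fun_sum hs

theorem dE_eq {E : (ℤ → ℝ × ℝ) → ℝ} {y u v : ℤ → ℝ × ℝ}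
    (h : HasVariations (fun t s => E (fun ℓ => y ℓ + t • u ℓ + s • v ℓ)) a b) :
    dE E y u = a := by
  obtain ⟨g, hg, hg0, -⟩ := h
  simpa [dE, hg0] using hg.self_of_nhds.deriv

theorem d2E_eq {E : (ℤ → ℝ × ℝ) → ℝ} {y u v : ℤ → ℝ × ℝ}
    (h : HasVariations (fun t s => E (fun ℓ => y ℓ + t • u ℓ + s • v ℓ)) a b) :
    d2E E y u v = b := by
  obtain ⟨g, hg, -, hgd⟩ := h
  have hEq : (fun s : ℝ => deriv (fun t : ℝ => E fun ℓ => y ℓ + t • u ℓ + s • v ℓ) 0) =ᶠ[𝓝 0] g :=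
    hg.mono fun _ hs => hs.deriv
  rw [d2E, hEq.deriv_eq, hgd.deriv]

end HasVariations

/-- Hessian of `x ↦ φ ‖x‖` at `(c, 0)`. -/
def bondHessian (φ : ℝ → ℝ) (c : ℝ) : (ℝ × ℝ) →ₗ[ℝ] (ℝ × ℝ) →ₗ[ℝ] ℝ :=
  LinearMap.mk₂ ℝ (fun p q => deriv (deriv φ) c * (p.1 * q.1) + deriv φ c / c * (p.2 * q.2))
    (fun _ _ _ => by simp only [Prod.fst_add, Prod.snd_add]; ring)
    (fun _ _ _ => by simp only [Prod.smul_fst, Prod.smul_snd, smul_eq_mul]; ring)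
    (fun _ _ _ => by simp only [Prod.fst_add, Prod.snd_add]; ring)
    (fun _ _ _ => by simp only [Prod.smul_fst, Prod.smul_snd, smul_eq_mul]; ring)

theorem bondHessian_apply (φ : ℝ → ℝ) (c : ℝ) (p q : ℝ × ℝ) :
    bondHessian φ c p q = deriv (deriv φ) c * (p.1 * q.1) + deriv φ c / c * (p.2 * q.2) := rfl

theorem sq_add_sq_pos_of_ne_zero {w : ℝ × ℝ} (hw : w ≠ 0) : 0 < w.1 ^ 2 + w.2 ^ 2 := by
  refine lt_of_le_of_ne (by positivity) fun h => hw (Prod.ext ?_ ?_) <;>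
    simp only [Prod.fst_zero, Prod.snd_zero] <;> nlinarith [sq_nonneg w.1, sq_nonneg w.2]

theorem enorm2_mk_zero {c : ℝ} (hc : 0 ≤ c) : enorm2 (c, 0) = c := by
  simp [enorm2, Real.sqrt_sq hc]

theorem hasDerivAt_enorm2_add_smul {w : ℝ × ℝ} (hw : w ≠ 0) (p : ℝ × ℝ) :
    HasDerivAt (fun t : ℝ => enorm2 (w + t • p)) (edot w p / enorm2 w) 0 := by
  have hsq : HasDerivAt (fun t : ℝ => (w.1 + t * p.1) ^ 2 + (w.2 + t * p.2) ^ 2)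
      (2 * edot w p) 0 := by
    refine ((((hasDerivAt_mul_const p.1).const_add w.1).fun_pow 2).fun_add
      (((hasDerivAt_mul_const p.2).const_add w.2).fun_pow 2)).congr_deriv ?_
    simp only [Nat.cast_ofNat, zero_mul, add_zero, Nat.add_one_sub_one, pow_one, edot]; ring
  have h0 : (w.1 + 0 * p.1) ^ 2 + (w.2 + 0 * p.2) ^ 2 = w.1 ^ 2 + w.2 ^ 2 := by ring
  refine (hsq.sqrt (by rw [h0]; exact (sq_add_sq_pos_of_ne_zero hw).ne')).congr_deriv ?_
  rw [h0, enorm2]; ring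

theorem hasVariations_bond {φ : ℝ → ℝ} (hφ : ContDiffOn ℝ 2 φ (Set.Ioi 0)) {c : ℝ} (hc : 0 < c)
    (p q : ℝ × ℝ) :
    HasVariations (fun t s => φ (enorm2 ((c, 0) + t • p + s • q)))
      (deriv φ c * p.1) (bondHessian φ c p q) := by
  have hφ' {x : ℝ} (hx : 0 < x) : HasDerivAt φ (deriv φ x) x :=
    ((hφ.differentiableOn (by norm_num)).differentiableAt (Ioi_mem_nhds hx)).hasDerivAt
  have hφ'' {x : ℝ} (hx : 0 < x) : HasDerivAt (deriv φ) (deriv (deriv φ) x) x :=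
    (((hφ.deriv_of_isOpen isOpen_Ioi (by norm_num : (1 : WithTop ℕ∞) + 1 ≤ 2)).differentiableOn
      one_ne_zero).differentiableAt (Ioi_mem_nhds hx)).hasDerivAt
  set w : ℝ → ℝ × ℝ := fun s => (c, 0) + s • q with hw
  have hw0 : w 0 = (c, 0) := by simp [hw]
  have hc0 : ((c, 0) : ℝ × ℝ) ≠ 0 := fun h => hc.ne' (congrArg Prod.fst h)
  have hr : HasDerivAt (fun s => enorm2 (w s)) q.1 0 := by
    refine (hasDerivAt_enorm2_add_smul hc0 q).congr_deriv ?_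
    rw [enorm2_mk_zero hc.le, edot]; field_simp; ring
  have hn : HasDerivAt (fun s => edot (w s) p) (edot q p) 0 := by
    have e : (fun s => edot (w s) p) = fun s => c * p.1 + s * edot q p := by
      funext s
      simp only [edot, hw, Prod.fst_add, Prod.snd_add, Prod.smul_fst, Prod.smul_snd, smul_eq_mul,
        zero_add]
      ring
    rw [e]; exact (hasDerivAt_mul_const _).const_add _
  refine ⟨fun s => deriv φ (enorm2 (w s)) * (edot (w s) p / enorm2 (w s)), ?_, ?_, ?_⟩
  · have hwc : ContinuousAt w 0 := by fun_prop
    filter_upwards [hwc.eventually_ne (hw0 ▸ hc0)] with s hs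
    have hpos : 0 < enorm2 (w s) := Real.sqrt_pos.2 (sq_add_sq_pos_of_ne_zero hs)
    have e : (fun t : ℝ => φ (enorm2 ((c, 0) + t • p + s • q))) =
        φ ∘ fun t => enorm2 (w s + t • p) := by
      funext t; simp only [Function.comp, hw, add_right_comm]
    rw [e]; exact (hφ' hpos).comp_of_eq 0 (hasDerivAt_enorm2_add_smul hs p) (by simp)
  · simp only [hw0, enorm2_mk_zero hc.le, edot]; field_simp; ring
  · have hpos : enorm2 (w 0) = c := by rw [hw0, enorm2_mk_zero hc.le]
    refine (((hφ'' hc).comp_of_eq 0 hr hpos.symm).mul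
      (hn.div hr (hpos ▸ hc.ne'))).congr_deriv ?_
    simp only [bondHessian_apply, Pi.div_apply, Function.comp_apply, hw0, enorm2_mk_zero hc.le,
      edot]
    field_simp; ring

section Energies

variable {N K : ℕ} {ε F : ℝ} {φ : ℝ → ℝ}

theorem bd_yLin_add (hε : ε ≠ 0) (u v : ℤ → ℝ × ℝ) (t s : ℝ) (ℓ : ℤ) :
    bd ε (fun m => yLin ε F m + t • u m + s • v m) ℓ = (F, 0) + t • bd ε u ℓ + s • bd ε v ℓ := by
  ext <;> simp only [bd, yLin, Int.cast_sub, Int.cast_one, Prod.smul_fst, Prod.smul_snd,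
    Prod.fst_sub, Prod.snd_sub, Prod.fst_add, Prod.snd_add, smul_eq_mul, zero_add] <;>
    field_simp <;> ring

theorem hasVariations_Ea (hε : ε ≠ 0) (hφ : ContDiffOn ℝ 2 φ (Set.Ioi 0)) (hF : 0 < F)
    (u v : ℤ → ℝ × ℝ) :
    HasVariations (fun t s => Ea N ε φ (fun ℓ => yLin ε F ℓ + t • u ℓ + s • v ℓ))
      (ε * ∑ ℓ ∈ Icc (1 : ℤ) N,
        (deriv φ F * (bd ε u ℓ).1 + deriv φ (2 * F) * (bd ε u (ℓ + 1) + bd ε u ℓ).1))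
      (ε * ∑ ℓ ∈ Icc (1 : ℤ) N, (bondHessian φ F (bd ε u ℓ) (bd ε v ℓ) +
        bondHessian φ (2 * F) (bd ε u (ℓ + 1) + bd ε u ℓ) (bd ε v (ℓ + 1) + bd ε v ℓ))) := by
  have e : (fun t s : ℝ => Ea N ε φ (fun ℓ => yLin ε F ℓ + t • u ℓ + s • v ℓ)) = fun t s =>
      ε * ∑ ℓ ∈ Icc (1 : ℤ) N, (φ (enorm2 ((F, 0) + t • bd ε u ℓ + s • bd ε v ℓ)) +
        φ (enorm2 ((2 * F, 0) + t • (bd ε u (ℓ + 1) + bd ε u ℓ) +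
          s • (bd ε v (ℓ + 1) + bd ε v ℓ)))) := by
    funext t s
    have hadd (a b c d : ℝ × ℝ) : ((F, 0) + t • a + s • b) + ((F, 0) + t • c + s • d) =
        ((2 * F, 0) + t • (a + c) + s • (b + d) : ℝ × ℝ) := by
      ext <;> simp only [Prod.fst_add, Prod.snd_add, Prod.smul_fst, Prod.smul_snd, smul_eq_mul,
        zero_add, smul_add] <;> ring
    simp only [Ea, bd_yLin_add hε, hadd]
  rw [e]
  exact (HasVariations.sum _ fun ℓ _ => (hasVariations_bond hφ hF _ _).add
    (hasVariations_bond hφ (by linarith) _ _)).const_mul ε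

theorem hasVariations_EQNL (hε : ε ≠ 0) (hφ : ContDiffOn ℝ 2 φ (Set.Ioi 0)) (hF : 0 < F)
    (u v : ℤ → ℝ × ℝ) :
    HasVariations (fun t s => EQNL N K ε φ (fun ℓ => yLin ε F ℓ + t • u ℓ + s • v ℓ))
      (ε * ∑ ℓ ∈ Icc (1 : ℤ) N, deriv φ F * (bd ε u ℓ).1
        + ε * ∑ ℓ ∈ Icc (1 : ℤ) K, deriv φ (2 * F) * (bd ε u (ℓ + 1) + bd ε u ℓ).1
        + ε * ∑ ℓ ∈ Icc ((K : ℤ) + 2) N, deriv φ (2 * F) * ((2 : ℝ) • bd ε u ℓ).1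
        + ε / 2 * (deriv φ (2 * F) * ((2 : ℝ) • bd ε u 1).1)
        + ε / 2 * (deriv φ (2 * F) * ((2 : ℝ) • bd ε u ((K : ℤ) + 1)).1))
      (ε * ∑ ℓ ∈ Icc (1 : ℤ) N, bondHessian φ F (bd ε u ℓ) (bd ε v ℓ)
        + ε * ∑ ℓ ∈ Icc (1 : ℤ) K,
          bondHessian φ (2 * F) (bd ε u (ℓ + 1) + bd ε u ℓ) (bd ε v (ℓ + 1) + bd ε v ℓ)
        + ε * ∑ ℓ ∈ Icc ((K : ℤ) + 2) N,
          bondHessian φ (2 * F) ((2 : ℝ) • bd ε u ℓ) ((2 : ℝ) • bd ε v ℓ)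
        + ε / 2 * bondHessian φ (2 * F) ((2 : ℝ) • bd ε u 1) ((2 : ℝ) • bd ε v 1)
        + ε / 2 * bondHessian φ (2 * F) ((2 : ℝ) • bd ε u ((K : ℤ) + 1))
          ((2 : ℝ) • bd ε v ((K : ℤ) + 1))) := by
  have h2 (x : ℝ × ℝ) : 2 * enorm2 x = enorm2 ((2 : ℝ) • x) := by
    simp only [enorm2, Prod.smul_fst, Prod.smul_snd, smul_eq_mul]
    rw [show (2 * x.1) ^ 2 + (2 * x.2) ^ 2 = 2 ^ 2 * (x.1 ^ 2 + x.2 ^ 2) by ring,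
      Real.sqrt_mul (by positivity), Real.sqrt_sq zero_le_two]
  have e : (fun t s : ℝ => EQNL N K ε φ (fun ℓ => yLin ε F ℓ + t • u ℓ + s • v ℓ)) = fun t s =>
      ε * ∑ ℓ ∈ Icc (1 : ℤ) N, φ (enorm2 ((F, 0) + t • bd ε u ℓ + s • bd ε v ℓ))
      + ε * ∑ ℓ ∈ Icc (1 : ℤ) K, φ (enorm2 ((2 * F, 0) + t • (bd ε u (ℓ + 1) + bd ε u ℓ) +
          s • (bd ε v (ℓ + 1) + bd ε v ℓ)))
      + ε * ∑ ℓ ∈ Icc ((K : ℤ) + 2) N,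
          φ (enorm2 ((2 * F, 0) + t • ((2 : ℝ) • bd ε u ℓ) + s • ((2 : ℝ) • bd ε v ℓ)))
      + ε / 2 * φ (enorm2 ((2 * F, 0) + t • ((2 : ℝ) • bd ε u 1) + s • ((2 : ℝ) • bd ε v 1)))
      + ε / 2 * φ (enorm2 ((2 * F, 0) + t • ((2 : ℝ) • bd ε u ((K : ℤ) + 1)) +
          s • ((2 : ℝ) • bd ε v ((K : ℤ) + 1)))) := by
    funext t s
    have hadd (a b c d : ℝ × ℝ) : ((F, 0) + t • a + s • b) + ((F, 0) + t • c + s • d) =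
        ((2 * F, 0) + t • (a + c) + s • (b + d) : ℝ × ℝ) := by
      ext <;> simp only [Prod.fst_add, Prod.snd_add, Prod.smul_fst, Prod.smul_snd, smul_eq_mul,
        zero_add, smul_add] <;> ring
    have hsmul (a b : ℝ × ℝ) : (2 : ℝ) • ((F, 0) + t • a + s • b) =
        ((2 * F, 0) + t • ((2 : ℝ) • a) + s • ((2 : ℝ) • b) : ℝ × ℝ) := by
      ext <;> simp only [smul_add, Prod.smul_mk, smul_eq_mul, mul_zero, Prod.fst_add, Prod.snd_add,
        Prod.smul_fst, Prod.smul_snd, zero_add] <;> ring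
    simp only [EQNL, bd_yLin_add hε, h2, hadd, hsmul]
  rw [e]
  have h2F : 0 < 2 * F := by linarith
  exact (((((HasVariations.sum _ fun ℓ _ => hasVariations_bond hφ hF _ _).const_mul ε).add
    ((HasVariations.sum _ fun ℓ _ => hasVariations_bond hφ h2F _ _).const_mul ε)).add
    ((HasVariations.sum _ fun ℓ _ => hasVariations_bond hφ h2F _ _).const_mul ε)).add
    ((hasVariations_bond hφ h2F _ _).const_mul _)).add ((hasVariations_bond hφ h2F _ _).const_mul _)

end Energies

namespace Int

variable {M : Type*} [AddCommMonoid M] (f : ℤ → M) {a b m : ℤ}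

theorem sum_Icc_succ_bot (h : a ≤ b) : ∑ ℓ ∈ Icc a b, f ℓ = f a + ∑ ℓ ∈ Icc (a + 1) b, f ℓ := by
  rw [Icc_add_one_left_eq_Ioc, add_sum_Ioc_eq_sum_Icc h]

theorem sum_Icc_succ_top (h : a ≤ b + 1) :
    ∑ ℓ ∈ Icc a (b + 1), f ℓ = ∑ ℓ ∈ Icc a b, f ℓ + f (b + 1) := by
  rw [← Ico_add_one_right_eq_Icc a b, sum_Ico_add_eq_sum_Icc h]

theorem sum_Icc_shift : ∑ ℓ ∈ Icc a b, f (ℓ + 1) = ∑ ℓ ∈ Icc (a + 1) (b + 1), f ℓ := by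
  rw [← map_add_right_Icc, sum_map]; rfl

theorem sum_Icc_consecutive (h₁ : a ≤ m + 1) (h₂ : m ≤ b) :
    ∑ ℓ ∈ Icc a b, f ℓ = ∑ ℓ ∈ Icc a m, f ℓ + ∑ ℓ ∈ Icc (m + 1) b, f ℓ := by
  rw [← sum_union (disjoint_left.2 fun x hx hy => by simp only [mem_Icc] at hx hy; omega)]
  congr 1; ext x; simp only [mem_union, mem_Icc]; omega

end Int

/-- Summation by parts behind both consistency identities: for `G i j` the pairing of bond `i` of `u`
with bond `j` of `v`, the left side is the QNL minus the atomistic second-neighbour contribution. -/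
theorem qnl_sub_atomistic_second_neighbour {N K : ℕ} (hKN : K < N) (G : ℤ → ℤ → ℝ)
    (hGl : ∀ i j, G (i + N) j = G i j) (hGr : ∀ i j, G i (j + N) = G i j) :
    let H : ℤ → ℝ := fun ℓ => G (ℓ + 1) (ℓ + 1) + G (ℓ + 1) ℓ + G ℓ (ℓ + 1) + G ℓ ℓ
    ∑ ℓ ∈ Icc (1 : ℤ) K, H ℓ + ∑ ℓ ∈ Icc ((K : ℤ) + 2) N, 4 * G ℓ ℓ
        + 2 * G 1 1 + 2 * G (K + 1) (K + 1) - ∑ ℓ ∈ Icc (1 : ℤ) N, H ℓ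
      = (G 1 1 - G 0 1) - (G (K + 2) (K + 1) - G (K + 1) (K + 1))
        - ∑ ℓ ∈ Icc ((K : ℤ) + 2) N, (G (ℓ + 1) ℓ - 2 * G ℓ ℓ + G (ℓ - 1) ℓ) := by
  intro H
  have hKN' : (K : ℤ) + 1 ≤ N := by omega
  have hK2 : (K : ℤ) + 1 + 1 = K + 2 := by ring
  have hdiag : ∑ ℓ ∈ Icc ((K : ℤ) + 1) N, G (ℓ + 1) (ℓ + 1)
      = ∑ ℓ ∈ Icc ((K : ℤ) + 2) N, G ℓ ℓ + G 1 1 := by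
    rw [Int.sum_Icc_shift (fun ℓ => G ℓ ℓ), hK2, Int.sum_Icc_succ_top _ (by omega), add_comm (N : ℤ),
      hGl, hGr]
  have hcross : ∑ ℓ ∈ Icc ((K : ℤ) + 1) N, G ℓ (ℓ + 1)
      = ∑ ℓ ∈ Icc ((K : ℤ) + 2) N, G (ℓ - 1) ℓ + G 0 1 := by
    have hwrap : G N (N + 1) = G 0 1 := by
      simpa [add_comm] using (hGl 0 (N + 1)).trans (add_comm (N : ℤ) 1 ▸ hGr 0 1)
    have := Int.sum_Icc_shift (fun ℓ => G (ℓ - 1) ℓ) (a := (K : ℤ) + 1) (b := N)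
    simp only [add_sub_cancel_right] at this
    rw [this, hK2, Int.sum_Icc_succ_top _ (by omega), add_sub_cancel_right, hwrap]
  have hdiag' := Int.sum_Icc_succ_bot (fun ℓ => G ℓ ℓ) hKN'
  have hcross' := Int.sum_Icc_succ_bot (fun ℓ => G (ℓ + 1) ℓ) hKN'
  rw [hK2] at hdiag' hcross'
  rw [Int.sum_Icc_consecutive H (m := K) (b := N) (by omega) (by omega)]
  simp only [H, sum_add_distrib, sum_sub_distrib, ← mul_sum]
  linarith

section Consistency

variable {N K : ℕ} {ε F : ℝ} {φ : ℝ → ℝ}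

theorem bd_add_period {u : ℤ → ℝ × ℝ} (hu : ∀ ℓ : ℤ, u (ℓ + N) = u ℓ) (ℓ : ℤ) :
    bd ε u (ℓ + N) = bd ε u ℓ := by
  simp only [bd, hu, show ℓ + N - 1 = ℓ - 1 + N by ring]

theorem smul_map_bd {M : Type*} [AddCommGroup M] [Module ℝ M] (hε : ε ≠ 0)
    (B : (ℝ × ℝ) →ₗ[ℝ] M) (p : ℤ → ℝ × ℝ) (ℓ : ℤ) :
    ε • B (bd ε p ℓ) = B (p ℓ) - B (p (ℓ - 1)) := by
  rw [bd, map_smul, smul_smul, mul_inv_cancel₀ hε, one_smul, map_sub]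

theorem dE_EQNL_eq_dE_Ea (hε : ε ≠ 0) (hφ : ContDiffOn ℝ 2 φ (Set.Ioi 0)) (hF : 0 < F)
    (hKN : K < N) {v : ℤ → ℝ × ℝ} (hv : ∀ ℓ : ℤ, v (ℓ + N) = v ℓ) :
    dE (EQNL N K ε φ) (yLin ε F) v = dE (Ea N ε φ) (yLin ε F) v := by
  rw [(hasVariations_EQNL hε hφ hF v v).dE_eq, (hasVariations_Ea hε hφ hF v v).dE_eq]
  have key := qnl_sub_atomistic_second_neighbour hKN (fun _ j => (bd ε v j).1)
    (fun _ _ => rfl) (fun _ _ => by rw [bd_add_period hv])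
  simp only [Prod.fst_add, Prod.smul_fst, smul_eq_mul, sub_self, sum_add_distrib,
    sum_sub_distrib, ← mul_sum, mul_add] at key ⊢
  linear_combination (ε * deriv φ (2 * F) / 2) * key

theorem d2E_EQNL_sub_d2E_Ea (hε : ε ≠ 0) (hφ : ContDiffOn ℝ 2 φ (Set.Ioi 0)) (hF : 0 < F)
    (hKN : K < N) {u v : ℤ → ℝ × ℝ} (hu : ∀ ℓ : ℤ, u (ℓ + N) = u ℓ)
    (hv : ∀ ℓ : ℤ, v (ℓ + N) = v ℓ) :
    d2E (EQNL N K ε φ) (yLin ε F) u v - d2E (Ea N ε φ) (yLin ε F) u v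
      = ε ^ 2 * bondHessian φ (2 * F) (bd ε (bd ε u) 1) (bd ε v 1)
        - ε ^ 2 * bondHessian φ (2 * F) (bd ε (bd ε u) ((K : ℤ) + 2)) (bd ε v ((K : ℤ) + 1))
        - ε ^ 3 * ∑ ℓ ∈ Icc ((K : ℤ) + 2) N,
            bondHessian φ (2 * F) (bd ε (bd ε (bd ε u)) (ℓ + 1)) (bd ε v ℓ) := by
  rw [(hasVariations_EQNL hε hφ hF u v).d2E_eq, (hasVariations_Ea hε hφ hF u v).d2E_eq]
  set Q := bondHessian φ (2 * F)
  have key := qnl_sub_atomistic_second_neighbour hKN (fun i j => Q (bd ε u i) (bd ε v j))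
    (fun _ _ => by rw [bd_add_period hu]) (fun _ _ => by rw [bd_add_period hv])
  have hdiff (p : ℤ → ℝ × ℝ) (ℓ : ℤ) (w : ℝ × ℝ) :
      ε * Q (bd ε p ℓ) w = Q (p ℓ) w - Q (p (ℓ - 1)) w := by
    simpa using congrArg (· w) (smul_map_bd hε Q p ℓ)
  have hbulk (ℓ : ℤ) : ε ^ 2 * Q (bd ε (bd ε (bd ε u)) (ℓ + 1)) (bd ε v ℓ)
      = Q (bd ε u (ℓ + 1)) (bd ε v ℓ) - 2 * Q (bd ε u ℓ) (bd ε v ℓ)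
        + Q (bd ε u (ℓ - 1)) (bd ε v ℓ) := by
    rw [pow_two, mul_assoc, hdiff, mul_sub, hdiff, hdiff, add_sub_cancel_right]
    ring_nf
  have h1 := hdiff (bd ε u) 1 (bd ε v 1)
  have h2 := hdiff (bd ε u) ((K : ℤ) + 2) (bd ε v ((K : ℤ) + 1))
  rw [show (K : ℤ) + 2 - 1 = K + 1 by ring] at h2
  have h3 : ε ^ 2 * ∑ ℓ ∈ Icc ((K : ℤ) + 2) N, Q (bd ε (bd ε (bd ε u)) (ℓ + 1)) (bd ε v ℓ)
      = ∑ ℓ ∈ Icc ((K : ℤ) + 2) N, (Q (bd ε u (ℓ + 1)) (bd ε v ℓ)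
        - 2 * Q (bd ε u ℓ) (bd ε v ℓ) + Q (bd ε u (ℓ - 1)) (bd ε v ℓ)) := by
    rw [mul_sum]; exact sum_congr rfl fun ℓ _ => hbulk ℓ
  simp only [map_add, LinearMap.add_apply, map_smul, LinearMap.smul_apply, smul_eq_mul,
    sum_add_distrib, sum_sub_distrib, ← mul_sum] at key h1 h2 h3 ⊢
  rw [sub_self] at h1
  linear_combination ε * key - ε * h1 + ε * h2 + ε * h3

end Consistency

theorem mul_add_mul_le_sqrt_mul_sqrt (a b c d : ℝ) :
    a * c + b * d ≤ √(a ^ 2 + b ^ 2) * √(c ^ 2 + d ^ 2) := by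
  simpa [Fin.sum_univ_two] using Real.sum_mul_le_sqrt_mul_sqrt univ ![a, b] ![c, d]

theorem abs_bondHessian_le (φ : ℝ → ℝ) (c : ℝ) (p q : ℝ × ℝ) :
    |bondHessian φ c p q| ≤ max |deriv (deriv φ) c| |deriv φ c / c| * (enorm2 p * enorm2 q) := by
  calc |bondHessian φ c p q|
      ≤ |deriv (deriv φ) c| * (|p.1| * |q.1|) + |deriv φ c / c| * (|p.2| * |q.2|) := by
        rw [bondHessian_apply, ← abs_mul, ← abs_mul, ← abs_mul, ← abs_mul]
        exact abs_add_le _ _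
    _ ≤ max |deriv (deriv φ) c| |deriv φ c / c| * (|p.1| * |q.1| + |p.2| * |q.2|) := by
        rw [mul_add]; gcongr; exacts [le_max_left _ _, le_max_right _ _]
    _ ≤ max |deriv (deriv φ) c| |deriv φ c / c| * (enorm2 p * enorm2 q) := by
        gcongr
        simpa only [enorm2, sq_abs] using mul_add_mul_le_sqrt_mul_sqrt |p.1| |p.2| |q.1| |q.2|

section Estimates

variable {N : ℕ} {ε M : ℝ} {B : ℝ × ℝ → ℝ × ℝ → ℝ}

theorem nrm_eq_sqrt_mul_sqrt (hε : 0 ≤ ε) (w : ℤ → ℝ × ℝ) :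
    nrm N ε w = √ε * √(∑ ℓ ∈ Icc (1 : ℤ) N, enorm2 (w ℓ) ^ 2) :=
  Real.sqrt_mul hε _

theorem abs_boundary_le (hε : 0 < ε) (hM : 0 ≤ M) (hB : ∀ p q, |B p q| ≤ M * (enorm2 p * enorm2 q))
    {i j : ℤ} (hi : i ∈ Icc (1 : ℤ) N) (hj : j ∈ Icc (1 : ℤ) N) (hij : i ≠ j)
    (a₁ a₂ : ℝ × ℝ) (w : ℤ → ℝ × ℝ) :
    |ε ^ 2 * B a₁ (w i) - ε ^ 2 * B a₂ (w j)|
      ≤ ε * M * √(ε * enorm2 a₁ ^ 2 + ε * enorm2 a₂ ^ 2) * nrm N ε w := by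
  have hw : enorm2 (w i) ^ 2 + enorm2 (w j) ^ 2 ≤ ∑ ℓ ∈ Icc (1 : ℤ) N, enorm2 (w ℓ) ^ 2 := by
    rw [← sum_pair (f := fun ℓ => enorm2 (w ℓ) ^ 2) hij]
    exact sum_le_sum_of_subset_of_nonneg (by simp [insert_subset_iff, hi, hj])
      fun _ _ _ => sq_nonneg _
  calc |ε ^ 2 * B a₁ (w i) - ε ^ 2 * B a₂ (w j)|
      ≤ ε ^ 2 * (|B a₁ (w i)| + |B a₂ (w j)|) := by
        rw [← mul_sub, abs_mul, abs_of_nonneg (by positivity)]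
        gcongr; exact abs_sub _ _
    _ ≤ ε ^ 2 * (M * (enorm2 a₁ * enorm2 (w i) + enorm2 a₂ * enorm2 (w j))) := by
        rw [mul_add M]; gcongr <;> apply hB
    _ ≤ ε ^ 2 * (M * (√(enorm2 a₁ ^ 2 + enorm2 a₂ ^ 2) *
          √(∑ ℓ ∈ Icc (1 : ℤ) N, enorm2 (w ℓ) ^ 2))) := by
        gcongr
        exact (mul_add_mul_le_sqrt_mul_sqrt _ _ _ _).trans (by gcongr)
    _ = ε * M * √(ε * enorm2 a₁ ^ 2 + ε * enorm2 a₂ ^ 2) * nrm N ε w := by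
        rw [nrm_eq_sqrt_mul_sqrt hε.le, ← mul_add, Real.sqrt_mul hε.le]
        linear_combination (-ε * M * √(enorm2 a₁ ^ 2 + enorm2 a₂ ^ 2) *
          √(∑ ℓ ∈ Icc (1 : ℤ) N, enorm2 (w ℓ) ^ 2)) * Real.mul_self_sqrt hε.le

theorem abs_bulk_le (hε : 0 < ε) (hM : 0 ≤ M) (hB : ∀ p q, |B p q| ≤ M * (enorm2 p * enorm2 q))
    {s : Finset ℤ} (hs : s ⊆ Icc (1 : ℤ) N) (b w : ℤ → ℝ × ℝ) :
    |ε ^ 3 * ∑ ℓ ∈ s, B (b ℓ) (w ℓ)|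
      ≤ ε * M * (ε * √(ε * ∑ ℓ ∈ s, enorm2 (b ℓ) ^ 2)) * nrm N ε w := by
  calc |ε ^ 3 * ∑ ℓ ∈ s, B (b ℓ) (w ℓ)|
      ≤ ε ^ 3 * (M * ∑ ℓ ∈ s, enorm2 (b ℓ) * enorm2 (w ℓ)) := by
        rw [abs_mul, abs_of_nonneg (by positivity), mul_sum]
        gcongr
        exact (abs_sum_le_sum_abs _ _).trans (sum_le_sum fun ℓ _ => hB _ _)
    _ ≤ ε ^ 3 * (M * (√(∑ ℓ ∈ s, enorm2 (b ℓ) ^ 2) *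
          √(∑ ℓ ∈ Icc (1 : ℤ) N, enorm2 (w ℓ) ^ 2))) := by
        gcongr
        refine (Real.sum_mul_le_sqrt_mul_sqrt _ _ _).trans ?_
        gcongr
    _ = ε * M * (ε * √(ε * ∑ ℓ ∈ s, enorm2 (b ℓ) ^ 2)) * nrm N ε w := by
        rw [nrm_eq_sqrt_mul_sqrt hε.le, Real.sqrt_mul hε.le]
        linear_combination (-ε ^ 2 * M * √(∑ ℓ ∈ s, enorm2 (b ℓ) ^ 2) *
          √(∑ ℓ ∈ Icc (1 : ℤ) N, enorm2 (w ℓ) ^ 2)) * Real.mul_self_sqrt hε.le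

end Estimates

theorem stmt_18_general (N : ℕ) (ε : ℝ) (hε : ε = (N : ℝ)⁻¹)
    (φ : ℝ → ℝ) (hφ : ContDiffOn ℝ 2 φ (Set.Ioi 0)) (F : ℝ) (hF : 0 < F)
    (K : ℕ) (hK1 : 1 < K) (hK2 : K + 2 < N)
    (f ua : ℤ → ℝ × ℝ) (hua : IsDisp N ua)
    (heq : ∀ v : ℤ → ℝ × ℝ, IsDisp N v →
      dE (Ea N ε φ) (yLin ε F) v + d2E (Ea N ε φ) (yLin ε F) ua v = ip N ε f v) :
    ∀ v : ℤ → ℝ × ℝ, IsDisp N v →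
      |dE (EQNL N K ε φ) (yLin ε F) v + d2E (EQNL N K ε φ) (yLin ε F) ua v - ip N ε f v| ≤
        ε * max |deriv (deriv φ) (2 * F)| |deriv φ (2 * F) / (2 * F)| *
          (Real.sqrt (ε * (enorm2 (bd ε (bd ε ua) 1)) ^ 2
              + ε * (enorm2 (bd ε (bd ε ua) ((K : ℤ) + 2))) ^ 2)
            + ε * Real.sqrt (ε * ∑ ℓ ∈ Finset.Icc ((K : ℤ) + 2) (N : ℤ),
                (enorm2 (bd ε (bd ε (bd ε ua)) (ℓ + 1))) ^ 2)) *
          nrm N ε (bd ε v) := by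
  intro v hv
  have hε0 : 0 < ε := hε ▸ inv_pos.2 (by exact_mod_cast (by omega : 0 < N))
  have hKN : K < N := by omega
  have hM : 0 ≤ max |deriv (deriv φ) (2 * F)| |deriv φ (2 * F) / (2 * F)| :=
    le_max_of_le_left (abs_nonneg _)
  have hB := abs_bondHessian_le φ (2 * F)
  rw [← heq v hv, add_sub_add_comm, dE_EQNL_eq_dE_Ea hε0.ne' hφ hF hKN hv.1, sub_self, zero_add,
    d2E_EQNL_sub_d2E_Ea hε0.ne' hφ hF hKN hua.1 hv.1]
  calc _ ≤ _ := abs_sub _ _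
    _ ≤ _ := add_le_add
        (abs_boundary_le (N := N) hε0 hM hB (by simp only [mem_Icc]; omega)
          (by simp only [mem_Icc]; omega) (by omega) _ _ _)
        (abs_bulk_le (N := N) hε0 hM hB (fun ℓ hℓ => by simp only [mem_Icc] at hℓ ⊢; omega) _ _)
    _ = _ := by ring

theorem stmt_18 (N : ℕ) (hN : 4 ≤ N) (ε : ℝ) (hε : ε = (N : ℝ)⁻¹)
    (φ : ℝ → ℝ) (hφ : ContDiffOn ℝ 2 φ (Set.Ioi 0)) (F : ℝ) (hF : 0 < F)
    (K : ℕ) (hK1 : 1 < K) (hK2 : K + 2 < N)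
    (f ua : ℤ → ℝ × ℝ) (hf : IsDisp N f) (hua : IsDisp N ua)
    (heq : ∀ v : ℤ → ℝ × ℝ, IsDisp N v →
      dE (Ea N ε φ) (yLin ε F) v + d2E (Ea N ε φ) (yLin ε F) ua v = ip N ε f v) :
    ∀ v : ℤ → ℝ × ℝ, IsDisp N v →
      |dE (EQNL N K ε φ) (yLin ε F) v + d2E (EQNL N K ε φ) (yLin ε F) ua v - ip N ε f v| ≤
        ε * max |deriv (deriv φ) (2 * F)| |deriv φ (2 * F) / (2 * F)| *
          (Real.sqrt (ε * (enorm2 (bd ε (bd ε ua) 1)) ^ 2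
              + ε * (enorm2 (bd ε (bd ε ua) ((K : ℤ) + 2))) ^ 2)
            + ε * Real.sqrt (ε * ∑ ℓ ∈ Finset.Icc ((K : ℤ) + 2) (N : ℤ),
                (enorm2 (bd ε (bd ε (bd ε ua)) (ℓ + 1))) ^ 2)) *
          nrm N ε (bd ε v) :=
  stmt_18_general N ε hε φ hφ F hF K hK1 hK2 f ua hua heq
end
end
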